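/- The maximal line segment in K containing the base [(0,0),(4,0)] is exactly [(0,0),(4,0)] itself; i.e., K contains no segment on the x-axis extending beyond [0,4] × {0}. -/

import Mathlib

/-!
Every map of `mainS` is a `1/2`-Lipschitz self-map of the triangle, so `K` lies in the triangle:
the distance to the triangle, maximised over the compact set `K = ⋃ i, mainS i '' K`, is at most
half of itself. The endpoints `0` and `4` of the base are vertices, hence extreme points, of the
triangle, and a segment in a set passing through two distinct extreme points must have them as
its endpoints.
-/

open Set Complex

/-- `K` is the attractor (invariant nonempty compact set) of the system `S`. -/
def IsAttractor {X : Type*} [MetricSpace X] {m : ℕ} (S : Fin m → X → X) (K : Set X) : Prop :=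
  K.Nonempty ∧ IsCompact K ∧ K = ⋃ i, S i '' K

/-- The five similarities of the main example, in the plane `ℝ² ≃ ℂ`:
`S₂ x = x/2 + (2,0)`, `S_k x = x/4 + a_k` for `a₁=(0,0)`, `a₃=(3,0)`,
`a₄=(1,√3)`, `a₅=(3/2, 3√3/2)`. -/
noncomputable def mainS : Fin 5 → ℂ → ℂ :=
  ![fun w => w / 4,
    fun w => w / 2 + 2,
    fun w => w / 4 + 3,
    fun w => w / 4 + (1 + Real.sqrt 3 * Complex.I),
    fun w => w / 4 + (3 / 2 + (3 * Real.sqrt 3 / 2) * Complex.I)]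

/-- The closed triangle with vertices `A=(0,0)`, `B=(2,2√3)`, `C=(4,0)`. -/
noncomputable def tri : Set ℂ :=
  convexHull ℝ {0, 2 + 2 * Real.sqrt 3 * Complex.I, 4}

open Metric NNReal

theorem LipschitzWith.infDist_le_mul_of_mapsTo {X : Type*} [MetricSpace X] {f : X → X}
    {c : ℝ≥0} {H : Set X} (hf : LipschitzWith c f) (hfH : MapsTo f H H) (hH : H.Nonempty)
    (y : X) : infDist (f y) H ≤ c * infDist y H := by
  have : Nonempty H := hH.to_subtype
  calc infDist (f y) H ≤ ⨅ z : H, c * dist y z :=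
        le_ciInf fun z => (infDist_le_dist_of_mem (hfH z.2)).trans (hf.dist_le_mul y z)
    _ = c * infDist y H := by rw [infDist_eq_iInf, Real.mul_iInf_of_nonneg c.coe_nonneg]

theorem IsAttractor.subset_of_mapsTo {X : Type*} [MetricSpace X] {m : ℕ} {S : Fin m → X → X}
    {K H : Set X} (hK : IsAttractor S K) {c : ℝ≥0} (hc : c < 1)
    (hS : ∀ i, LipschitzWith c (S i)) (hSH : ∀ i, MapsTo (S i) H H) (hH : IsClosed H)
    (hHne : H.Nonempty) : K ⊆ H := by
  obtain ⟨hKne, hKc, hKS⟩ := hK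
  obtain ⟨x₀, hx₀, hmax⟩ := hKc.exists_isMaxOn hKne (continuous_infDist_pt H).continuousOn
  have hx₀H : infDist x₀ H = 0 := by
    obtain ⟨i, y, hy, rfl⟩ := mem_iUnion.1 (hKS ▸ hx₀ : x₀ ∈ ⋃ i, S i '' K)
    have : infDist (S i y) H ≤ c * infDist (S i y) H :=
      ((hS i).infDist_le_mul_of_mapsTo (hSH i) hHne y).trans
        (mul_le_mul_of_nonneg_left (hmax hy) c.coe_nonneg)
    have hc' : (c : ℝ) < 1 := hc
    nlinarith [infDist_nonneg (x := S i y) (s := H)]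
  intro x hx
  refine (hH.mem_iff_infDist_zero hHne).2 (le_antisymm ?_ infDist_nonneg)
  exact hx₀H ▸ hmax hx

theorem lipschitzWith_div_add {k : ℂ} (hk : 2 ≤ ‖k‖) (a : ℂ) :
    LipschitzWith (1 / 2) fun w : ℂ => w / k + a := by
  refine LipschitzWith.of_dist_le_mul fun x y => ?_
  rw [dist_add_right, dist_eq_norm, div_sub_div_same, norm_div, dist_eq_norm]
  push_cast
  rw [div_le_iff₀ (by linarith)]
  nlinarith [norm_nonneg (x - y)]

theorem mainS_lipschitzWith (i : Fin 5) : LipschitzWith (1 / 2) (mainS i) := by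
  have h4 : (2 : ℝ) ≤ ‖(4 : ℂ)‖ := by norm_num
  have h2 : (2 : ℝ) ≤ ‖(2 : ℂ)‖ := by norm_num
  fin_cases i
  · simpa [mainS] using lipschitzWith_div_add h4 0
  · exact lipschitzWith_div_add h2 2
  · exact lipschitzWith_div_add h4 3
  · exact lipschitzWith_div_add h4 _
  · exact lipschitzWith_div_add h4 _

/-- The triangle `tri`, as the intersection of the three half-planes bounded by its sides. -/
def triangle : Set ℂ :=
  {z | 0 ≤ z.im ∧ z.im ≤ √3 * z.re ∧ z.im ≤ √3 * (4 - z.re)}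

theorem isClosed_triangle : IsClosed triangle := by
  simp only [triangle, ofPred_and]
  exact (isClosed_le (by fun_prop) (by fun_prop)).inter <|
    (isClosed_le (by fun_prop) (by fun_prop)).inter (isClosed_le (by fun_prop) (by fun_prop))

theorem zero_mem_triangle : (0 : ℂ) ∈ triangle := by simp [triangle]

theorem mainS_mapsTo_triangle (i : Fin 5) : MapsTo (mainS i) triangle triangle := by
  rintro z ⟨h₁, h₂, h₃⟩
  have h3 : 0 ≤ √3 := Real.sqrt_nonneg 3
  fin_cases i <;>
    simp only [triangle, mainS, Fin.zero_eta, Fin.mk_one, Fin.reduceFinMk, Fin.isValue,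
      Matrix.cons_val', Matrix.cons_val_fin_one, Matrix.cons_val, Matrix.cons_val_one,
      Matrix.cons_val_zero, mem_ofPred_eq, add_re, add_im, div_ofNat_re, div_ofNat_im, re_ofNat,
      im_ofNat, one_re, one_im, mul_re, mul_im, ofReal_re, ofReal_im, I_re, I_im, mul_one,
      mul_zero, zero_mul, add_zero, zero_add, sub_self, sub_zero, zero_div] <;>
    refine ⟨?_, ?_, ?_⟩ <;> nlinarith

theorem zero_mem_extremePoints_triangle : (0 : ℂ) ∈ triangle.extremePoints ℝ := by
  refine exposedPoints_subset_extremePoints ⟨zero_mem_triangle, -reCLM, fun z hz => ?_⟩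
  have h3 : 0 < √3 := by positivity
  simp only [neg_apply, reCLM_apply, zero_re, neg_zero, neg_nonneg]
  obtain ⟨h₁, h₂, h₃⟩ := hz
  refine ⟨by nlinarith, fun h => Complex.ext ?_ ?_⟩
  exacts [by rw [zero_re]; nlinarith, by rw [zero_im]; nlinarith]

theorem four_mem_extremePoints_triangle : (4 : ℂ) ∈ triangle.extremePoints ℝ := by
  have h3 : 0 < √3 := by positivity
  refine exposedPoints_subset_extremePoints ⟨?_, reCLM, fun z hz => ?_⟩
  · simp [triangle]
  simp only [reCLM_apply]
  obtain ⟨h₁, h₂, h₃⟩ := hz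
  refine ⟨by rw [re_ofNat]; nlinarith, fun h => Complex.ext ?_ ?_⟩ <;>
    simp only [re_ofNat, im_ofNat] at h ⊢ <;> nlinarith

theorem segment_eq_of_mem_extremePoints {𝕜 E : Type*} [Ring 𝕜] [LinearOrder 𝕜]
    [IsStrictOrderedRing 𝕜] [DenselyOrdered 𝕜] [AddCommGroup E] [Module 𝕜 E]
    [Module.IsTorsionFree 𝕜 E]
    {A : Set E} {a b p q : E} (ha : a ∈ A.extremePoints 𝕜) (hb : b ∈ A.extremePoints 𝕜)
    (hab : a ≠ b) (hp : p ∈ A) (hq : q ∈ A) (haS : a ∈ segment 𝕜 p q)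
    (hbS : b ∈ segment 𝕜 p q) : segment 𝕜 p q = segment 𝕜 a b := by
  rcases (mem_extremePoints_iff_forall_segment.1 ha).2 p hp q hq haS with rfl | rfl <;>
    rcases (mem_extremePoints_iff_forall_segment.1 hb).2 _ hp _ hq hbS with rfl | rfl
  exacts [absurd rfl hab, rfl, segment_symm 𝕜 _ _, absurd rfl hab]

/-- The maximal segment in `K` containing the base `[(0,0),(4,0)]` is the
base itself. -/
theorem stmt13 (K : Set ℂ) (hK : IsAttractor mainS K) :
    ∀ p q : ℂ, segment ℝ (0 : ℂ) 4 ⊆ segment ℝ p q → segment ℝ p q ⊆ K →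
      segment ℝ p q = segment ℝ (0 : ℂ) 4 := by
  intro p q hbase hpqK
  have hKT : K ⊆ triangle := hK.subset_of_mapsTo (c := 1 / 2) (by norm_num)
    mainS_lipschitzWith mainS_mapsTo_triangle isClosed_triangle ⟨0, zero_mem_triangle⟩
  exact segment_eq_of_mem_extremePoints zero_mem_extremePoints_triangle
    four_mem_extremePoints_triangle (by norm_num) (hKT (hpqK (left_mem_segment ℝ p q)))
    (hKT (hpqK (right_mem_segment ℝ p q))) (hbase (left_mem_segment ℝ 0 4))
    (hbase (right_mem_segment ℝ 0 4))
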